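/- Let (X, F, θ, T) be an ergodic measure-preserving system, let (G_t)_{t>0} be a measurable family of functions with sup_t |G_t| ∈ L¹(θ) and G = lim_{t→0} G_t existing θ-a.e. Suppose t_{N,n} : X → ℝ are functions such that for θ-a.e. x and every ε > 0, for all large N we have |t_{N,n}(x)| < ε for all 1 ≤ n ≤ (1−ε)N. Then (1/N) Σ_{n=1}^N G_{t_{N,n}(x)}(T^n x) → ∫ G dθ for θ-a.e. x. -/

import Mathlib

/-!
Let `f` be a measurable version of `Glim` and `ω_δ y = sup_{|t| ≤ δ} |G_t y - f y|`. For the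
indices `n ≤ (1 - δ) N` the `n`-th summand differs from `f (Tⁿ x)` by at most `ω_δ (Tⁿ x)`, and
for the last `δ N` indices by at most `u (Tⁿ x)` with `u = bound + |f|`. Birkhoff's ergodic
theorem, applied to `f`, `u` and every `ω_δ`, therefore puts the averages eventually within
`∫ ω_δ + δ ∫ u` of `∫ f`, and `∫ ω_δ → 0` by dominated convergence.

The delicate point is that `ω_δ`, a supremum over uncountably many `t`, is only null-measurable:
its superlevel sets are projections of measurable subsets of `ℝ × X`. Coding the countably many
measurable subsets of `X` that such a set involves into a map `X → (ℕ → Bool)` turns the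
projection into the preimage of an analytic set, and analytic sets are null-measurable
(capacitability).
-/

open MeasureTheory Filter Topology
open scoped ENNReal

section MeasurableProjection

open Set MeasurableSpace

theorem MeasureTheory.exists_lt_measure_image_inter_le {α β : Type*} [MeasurableSpace α]
    (μ : Measure α) (f : β → α) (g : β → ℕ) {C : Set β} {m : ℝ≥0∞} (hm : m < μ (f '' C)) :
    ∃ j, m < μ (f '' (C ∩ {x | g x ≤ j})) := by
  have hunion : ⋃ j, f '' (C ∩ {x | g x ≤ j}) = f '' C := by
    rw [← image_iUnion, ← inter_iUnion,
      iUnion_eq_univ_iff.2 fun x => ⟨g x, (le_rfl : g x ≤ g x)⟩, inter_univ]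
  have hmono : Monotone fun j => f '' (C ∩ {x | g x ≤ j}) := fun i j hij =>
    image_mono (inter_subset_inter_right _ fun x hx => le_trans hx hij)
  rw [← hunion, hmono.measure_iUnion] at hm
  exact lt_iSup_iff.1 hm

theorem MeasureTheory.nullMeasurableSet_of_forall_lt_exists_subset {α : Type*}
    [MeasurableSpace α] {μ : Measure α} [IsFiniteMeasure μ] {s : Set α}
    (h : ∀ m < μ s, ∃ t ⊆ s, MeasurableSet t ∧ m ≤ μ t) : NullMeasurableSet s μ := by
  rcases eq_zero_or_pos (μ s) with hs | hs
  · exact .of_null hs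
  obtain ⟨m, -, hm, hm_lim⟩ := exists_seq_strictMono_tendsto' hs
  choose t hts htm hmt using fun n => h (m n) (hm n).2
  have hle : μ s ≤ μ (⋃ n, t n) :=
    le_of_tendsto' hm_lim fun n => (hmt n).trans (measure_mono (subset_iUnion t n))
  exact (MeasurableSet.iUnion htm).nullMeasurableSet.congr
    (ae_eq_of_subset_of_measure_ge (iUnion_subset hts) hle
      (MeasurableSet.iUnion htm).nullMeasurableSet (measure_ne_top μ s))

section Capacitability

variable {α : Type*} [TopologicalSpace α] [FirstCountableTopology α] [T2Space α]

theorem mem_range_of_forall_mem_closure_image {f : (ℕ → ℕ) → α} (hf : Continuous f)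
    {τ : ℕ → ℕ} {z : α} (hz : ∀ n, z ∈ closure (f '' {x | ∀ i < n, x i ≤ τ i})) :
    z ∈ range f := by
  obtain ⟨U, hU⟩ := (𝓝 z).exists_antitone_basis
  have hx : ∀ n, ∃ x : ℕ → ℕ, (∀ i < n, x i ≤ τ i) ∧ f x ∈ U n := fun n => by
    obtain ⟨_, hzU, x, hx, rfl⟩ := mem_closure_iff_nhds.1 (hz n) (U n) (hU.mem n)
    exact ⟨x, hx, hzU⟩
  choose x hxτ hxU using hx
  -- every coordinate of the sequence `x` takes finitely many values
  set σ : ℕ → ℕ := fun i => τ i + ∑ n ∈ Finset.range (i + 1), x n i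
  have hxσ : ∀ n, x n ∈ univ.pi fun i => Iic (σ i) := fun n i _ => by
    rcases lt_or_ge i n with hin | hni
    · exact (hxτ n i hin).trans (Nat.le_add_right _ _)
    · exact (Finset.single_le_sum (f := fun n => x n i) (fun _ _ => Nat.zero_le _)
        (Finset.mem_range.2 (Nat.lt_succ_of_le hni))).trans (Nat.le_add_left _ _)
  obtain ⟨a, -, φ, hφ, hxa⟩ :=
    (isCompact_univ_pi fun i => (finite_Iic (σ i)).isCompact).tendsto_subseq hxσ
  exact ⟨a, tendsto_nhds_unique ((hf.tendsto a).comp hxa)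
    ((hU.tendsto hxU).comp hφ.tendsto_atTop)⟩

variable [MeasurableSpace α] [OpensMeasurableSpace α] {μ : Measure α} [IsFiniteMeasure μ]

theorem exists_isClosed_subset_range_le_measure {f : (ℕ → ℕ) → α} (hf : Continuous f)
    {m : ℝ≥0∞} (hm : m < μ (range f)) : ∃ L, IsClosed L ∧ L ⊆ range f ∧ m ≤ μ L := by
  choose! j hj using fun (C : Set (ℕ → ℕ)) (n : ℕ) (hC : m < μ (f '' C)) =>
    exists_lt_measure_image_inter_le μ f (· n) hC
  -- cut down `univ` one coordinate at a time, keeping the outer measure of the image above `m`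
  let C : ℕ → Set (ℕ → ℕ) := fun n => Nat.rec univ (fun k D => D ∩ {x | x k ≤ j D k}) n
  have hCm : ∀ n, m < μ (f '' C n) := fun n => by
    induction n with
    | zero => simpa [C] using hm
    | succ n ih => exact hj _ n ih
  have hCτ : ∀ n, C n ⊆ {x | ∀ i < n, x i ≤ j (C i) i} := fun n => by
    induction n with
    | zero => simp
    | succ n ih =>
      rintro x ⟨hx, hxn⟩ i hi
      rcases Nat.lt_succ_iff_lt_or_eq.1 hi with hi | rfl
      exacts [ih hx i hi, hxn]
  have hanti : Antitone fun n => closure (f '' C n) :=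
    antitone_nat_of_succ_le fun n => closure_mono (image_mono inter_subset_left)
  refine ⟨⋂ n, closure (f '' C n), isClosed_iInter fun n => isClosed_closure, fun z hz =>
    mem_range_of_forall_mem_closure_image hf fun n =>
      closure_mono (image_mono (hCτ n)) (mem_iInter.1 hz n), ?_⟩
  rw [hanti.measure_iInter (fun n => isClosed_closure.nullMeasurableSet)
    ⟨0, measure_ne_top μ _⟩]
  exact le_iInf fun n => (hCm n).le.trans (measure_mono subset_closure)

theorem MeasureTheory.AnalyticSet.nullMeasurableSet {A : Set α} (hA : AnalyticSet A) :
    NullMeasurableSet A μ := by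
  rw [AnalyticSet] at hA
  rcases hA with rfl | ⟨f, hf, rfl⟩
  · exact .empty
  refine nullMeasurableSet_of_forall_lt_exists_subset fun m hm => ?_
  obtain ⟨L, hL, hLf, hmL⟩ := exists_isClosed_subset_range_le_measure hf hm
  exact ⟨L, hLf, hL.measurableSet, hmL⟩

end Capacitability

theorem MeasurableSet.exists_measurable_cantor_preimage {Y X : Type*} [MeasurableSpace Y]
    [MeasurableSpace X] {S : Set (Y × X)} (hS : MeasurableSet S) :
    ∃ π : X → ℕ → Bool, Measurable π ∧
      ∃ S' : Set (Y × (ℕ → Bool)), MeasurableSet S' ∧ Prod.map id π ⁻¹' S' = S := by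
  classical
  rw [← generateFrom_prod] at hS
  induction S, hS using generateFrom_induction with
  | hC S hS =>
    obtain ⟨A, hA, B, hB, rfl⟩ := hS
    refine ⟨fun x _ => decide (x ∈ B), measurable_pi_lambda _ fun _ =>
      measurable_to_bool (by simpa [preimage] using (hB : MeasurableSet B)),
      A ×ˢ ((· 0) ⁻¹' {true}), hA.prod (measurable_pi_apply 0 (measurableSet_singleton true)), ?_⟩
    ext ⟨y, x⟩
    simp
  | empty => exact ⟨fun _ _ => false, measurable_const, ∅, .empty, rfl⟩
  | compl S _ ih =>
    obtain ⟨π, hπ, S', hS', rfl⟩ := ih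
    exact ⟨π, hπ, S'ᶜ, hS'.compl, rfl⟩
  | iUnion S _ ih =>
    choose π hπ S' hS' hSS' using ih
    -- interleave the codes `π i` into one code and read the `i`-th one back off it
    let r : ℕ → (ℕ → Bool) → ℕ → Bool := fun i z k => z (Nat.pair i k)
    have hr : ∀ i, Measurable (r i) := fun i =>
      measurable_pi_lambda _ fun k => measurable_pi_apply _
    refine ⟨fun x k => π k.unpair.1 x k.unpair.2, measurable_pi_lambda _ fun k =>
      (measurable_pi_apply _).comp (hπ _), ⋃ i, Prod.map id (r i) ⁻¹' S' i,
      .iUnion fun i => (measurable_id.prodMap (hr i)) (hS' i), ?_⟩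
    simp only [preimage_iUnion, ← hSS']
    ext ⟨y, x⟩
    simp [r]

theorem MeasurableSet.nullMeasurableSet_image_snd {Y X : Type*} [TopologicalSpace Y]
    [PolishSpace Y] [MeasurableSpace Y] [BorelSpace Y] [MeasurableSpace X] {μ : Measure X}
    [IsFiniteMeasure μ] {S : Set (Y × X)} (hS : MeasurableSet S) :
    NullMeasurableSet (Prod.snd '' S) μ := by
  obtain ⟨π, hπ, S', hS', rfl⟩ := hS.exists_measurable_cantor_preimage
  have hproj : Prod.snd '' (Prod.map id π ⁻¹' S') = π ⁻¹' (Prod.snd '' S') := by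
    ext x
    simp
  rw [hproj]
  exact (hS'.analyticSet_image measurable_snd).nullMeasurableSet.preimage
    (hπ.quasiMeasurePreserving μ)

end MeasurableProjection

section PointwiseErgodic

open Set

variable {X : Type*} {T : X → X} {g : X → ℝ}

noncomputable def birkhoffMax (T : X → X) (g : X → ℝ) (N : ℕ) : X → ℝ :=
  (Finset.range (N + 1)).sup' Finset.nonempty_range_add_one fun n => birkhoffSum T g n

theorem birkhoffSum_le_birkhoffMax {n N : ℕ} (hn : n ≤ N) (x : X) :
    birkhoffSum T g n x ≤ birkhoffMax T g N x := by
  rw [birkhoffMax, Finset.sup'_apply]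
  exact Finset.le_sup' (fun n => birkhoffSum T g n x) (Finset.mem_range_succ_iff.2 hn)

theorem birkhoffMax_nonneg (N : ℕ) (x : X) : 0 ≤ birkhoffMax T g N x :=
  (birkhoffSum_zero T g x).symm.trans_le (birkhoffSum_le_birkhoffMax N.zero_le x)

theorem birkhoffMax_mono (x : X) : Monotone fun N => birkhoffMax T g N x := fun M N hMN => by
  dsimp only
  rw [birkhoffMax, Finset.sup'_apply]
  exact Finset.sup'_le _ _ fun n hn =>
    birkhoffSum_le_birkhoffMax ((Finset.mem_range_succ_iff.1 hn).trans hMN) x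

theorem birkhoffMax_le_max_add_comp (N : ℕ) (x : X) :
    birkhoffMax T g N x ≤ max 0 (g x + birkhoffMax T g N (T x)) := by
  rw [birkhoffMax, Finset.sup'_apply]
  refine Finset.sup'_le _ _ fun n hn => ?_
  cases n with
  | zero => simp
  | succ n =>
    rw [birkhoffSum_succ']
    exact le_max_of_le_right ((add_le_add_iff_left _).2 (birkhoffSum_le_birkhoffMax
      (Nat.le_of_succ_le (Finset.mem_range_succ_iff.1 hn)) (T x)))

theorem exists_birkhoffMax_pos_iff (x : X) :
    (∃ N, 0 < birkhoffMax T g N x) ↔ ∃ n, 0 < birkhoffSum T g n x := by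
  refine ⟨fun ⟨N, hN⟩ => ?_,
    fun ⟨_, hn⟩ => ⟨_, hn.trans_le (birkhoffSum_le_birkhoffMax le_rfl x)⟩⟩
  rw [birkhoffMax, Finset.sup'_apply, Finset.lt_sup'_iff] at hN
  obtain ⟨n, -, hn⟩ := hN
  exact ⟨n, hn⟩

theorem birkhoffSum_indicator_of_preimage_eq {E : Set X} (hE : T ⁻¹' E = E) (n : ℕ) (x : X) :
    birkhoffSum T (E.indicator g) n x = E.indicator (birkhoffSum T g n) x := by
  have hiter : ∀ k, T^[k] x ∈ E ↔ x ∈ E := fun k => by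
    rw [← mem_preimage, preimage_iterate_eq, Function.iterate_fixed hE]
  by_cases hx : x ∈ E
  · simp only [birkhoffSum, indicator_of_mem hx, indicator_of_mem ((hiter _).2 hx)]
  · simp only [birkhoffSum, indicator_of_notMem hx,
      indicator_of_notMem (mt (hiter _).1 hx), Finset.sum_const_zero]

theorem sum_Icc_iterate_eq_birkhoffSum (N : ℕ) (x : X) :
    ∑ n ∈ Finset.Icc 1 N, g (T^[n] x) = birkhoffSum T g N (T x) := by
  rw [birkhoffSum, ← Finset.Ico_add_one_right_eq_Icc, Finset.sum_Ico_eq_sum_range]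
  simp [add_comm 1, Function.iterate_succ_apply]

variable [MeasurableSpace X] {μ : Measure X}

theorem measurable_birkhoffMax (hT : Measurable T) (hg : Measurable g) (N : ℕ) :
    Measurable (birkhoffMax T g N) :=
  Finset.measurable_sup' _ fun _ _ =>
    Finset.measurable_sum _ fun k _ => hg.comp (hT.iterate k)

theorem MeasureTheory.MeasurePreserving.integrable_birkhoffSum (hT : MeasurePreserving T μ μ)
    (hg : Integrable g μ) (n : ℕ) : Integrable (birkhoffSum T g n) μ := by
  unfold birkhoffSum
  exact integrable_finsetSum _ fun k _ =>
    ((hT.iterate k).integrable_comp hg.aestronglyMeasurable).2 hg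

theorem MeasureTheory.MeasurePreserving.integrable_birkhoffMax (hT : MeasurePreserving T μ μ)
    (hg : Integrable g μ) (N : ℕ) : Integrable (birkhoffMax T g N) μ :=
  Finset.sup'_induction (p := fun f => Integrable f μ) _ _ (fun _ h₁ _ h₂ => h₁.sup h₂)
    fun n _ => hT.integrable_birkhoffSum hg n

theorem MeasureTheory.MeasurePreserving.setIntegral_birkhoffMax_pos_nonneg
    (hT : MeasurePreserving T μ μ) (hgm : Measurable g) (hg : Integrable g μ) (N : ℕ) :
    0 ≤ ∫ x in {x | 0 < birkhoffMax T g N x}, g x ∂μ := by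
  set Φ := birkhoffMax T g N
  have hΦm : Measurable Φ := measurable_birkhoffMax hT.measurable hgm N
  have hΦ : Integrable Φ μ := hT.integrable_birkhoffMax hg N
  have hΦT : Integrable (Φ ∘ T) μ := (hT.integrable_comp hΦ.aestronglyMeasurable).2 hΦ
  have hA : MeasurableSet {x | 0 < Φ x} := measurableSet_lt measurable_const hΦm
  have hΦ_le : ∀ x ∈ {x | 0 < Φ x}, Φ x - Φ (T x) ≤ g x := fun x hx => by
    have := (le_max_iff.1 (birkhoffMax_le_max_add_comp (T := T) (g := g) N x)).resolve_left
      (not_le.2 hx)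
    linarith
  have hΦ_int : ∫ x in {x | 0 < Φ x}, Φ x ∂μ = ∫ x, Φ x ∂μ :=
    setIntegral_eq_integral_of_forall_compl_eq_zero fun x hx =>
      le_antisymm (not_lt.1 hx) (birkhoffMax_nonneg N x)
  have hΦT_int : ∫ x in {x | 0 < Φ x}, Φ (T x) ∂μ ≤ ∫ x, Φ x ∂μ := by
    calc ∫ x in {x | 0 < Φ x}, Φ (T x) ∂μ ≤ ∫ x, Φ (T x) ∂μ :=
          setIntegral_le_integral hΦT (.of_forall fun x => birkhoffMax_nonneg N (T x))
      _ = ∫ x, Φ x ∂μ := by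
          rw [← integral_map hT.measurable.aemeasurable hΦm.aestronglyMeasurable, hT.map_eq]
  calc (0 : ℝ) ≤ ∫ x in {x | 0 < Φ x}, Φ x ∂μ - ∫ x in {x | 0 < Φ x}, Φ (T x) ∂μ := by
        linarith
    _ = ∫ x in {x | 0 < Φ x}, (Φ x - Φ (T x)) ∂μ :=
        (integral_sub hΦ.integrableOn hΦT.integrableOn).symm
    _ ≤ ∫ x in {x | 0 < Φ x}, g x ∂μ :=
        setIntegral_mono_on (hΦ.sub hΦT).integrableOn hg.integrableOn hA hΦ_le

theorem MeasureTheory.MeasurePreserving.setIntegral_exists_birkhoffSum_pos_nonneg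
    (hT : MeasurePreserving T μ μ) (hgm : Measurable g) (hg : Integrable g μ) :
    0 ≤ ∫ x in {x | ∃ n, 0 < birkhoffSum T g n x}, g x ∂μ := by
  have hU : ⋃ N, {x | 0 < birkhoffMax T g N x} = {x | ∃ n, 0 < birkhoffSum T g n x} := by
    ext x
    simp only [mem_iUnion, mem_ofPred_eq, exists_birkhoffMax_pos_iff]
  have hlim := tendsto_setIntegral_of_monotone
    (fun N => measurableSet_lt measurable_const (measurable_birkhoffMax hT.measurable hgm N))
    (fun M N hMN x (hx : 0 < _) => hx.trans_le (birkhoffMax_mono x hMN))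
    (by rw [hU]; exact hg.integrableOn)
  rw [hU] at hlim
  exact ge_of_tendsto' hlim (hT.setIntegral_birkhoffMax_pos_nonneg hgm hg)

theorem Ergodic.ae_bddAbove_birkhoffSum (hT : Ergodic T μ) (hgm : Measurable g)
    (hg : Integrable g μ) (hneg : ∫ x, g x ∂μ < 0) :
    ∀ᵐ x ∂μ, BddAbove (range fun n => birkhoffSum T g n x) := by
  have hSm : ∀ n, Measurable (birkhoffSum T g n) := fun n =>
    Finset.measurable_sum _ fun k _ => hgm.comp (hT.measurable.iterate k)
  set E := {x | ∀ M : ℕ, ∃ n, (M : ℝ) < birkhoffSum T g n x}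
  have hEm : MeasurableSet E := by
    simp only [E, ofPred_forall, ofPred_exists]
    exact .iInter fun M => .iUnion fun n => measurableSet_lt measurable_const (hSm n)
  -- `E` is invariant since `birkhoffSum T g (n + 1) x = g x + birkhoffSum T g n (T x)`
  have hE : T ⁻¹' E = E := by
    ext x
    simp only [E, mem_preimage, mem_ofPred_eq]
    constructor
    · intro h M
      obtain ⟨n, hn⟩ := h ⌈M - g x⌉₊
      exact ⟨n + 1, by rw [birkhoffSum_succ']; linarith [Nat.le_ceil (M - g x)]⟩
    · intro h M
      obtain ⟨n, hn⟩ := h ⌈M + g x⌉₊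
      cases n with
      | zero => exact absurd hn (not_lt.2 (Nat.cast_nonneg _))
      | succ n => exact ⟨n, by rw [birkhoffSum_succ'] at hn; linarith [Nat.le_ceil (M + g x)]⟩
  have hmax := hT.toMeasurePreserving.setIntegral_exists_birkhoffSum_pos_nonneg
    (hgm.indicator hEm) (hg.indicator hEm)
  have hpos : {x | ∃ n, 0 < birkhoffSum T (E.indicator g) n x} = E := by
    ext x
    simp only [birkhoffSum_indicator_of_preimage_eq hE, mem_ofPred_eq]
    by_cases hx : x ∈ E
    · simpa [indicator_of_mem hx, hx] using hx 0
    · simp [hx]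
  rw [hpos, setIntegral_indicator hEm, inter_self] at hmax
  rcases hT.measure_self_or_compl_eq_zero hEm hE with hE0 | hEc0
  · filter_upwards [measure_eq_zero_iff_ae_notMem.1 hE0] with x hx
    simp only [E, mem_ofPred_eq, not_forall, not_exists, not_lt] at hx
    obtain ⟨M, hM⟩ := hx
    exact ⟨M, forall_mem_range.2 hM⟩
  · rw [setIntegral_eq_integral_of_ae_compl_eq_zero
      ((measure_eq_zero_iff_ae_notMem.1 hEc0).mono fun x hx hxE => absurd hxE hx)] at hmax
    exact absurd hmax (not_le.2 hneg)

variable [IsProbabilityMeasure μ] {f : X → ℝ}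

theorem Ergodic.ae_eventually_birkhoffAverage_lt (hT : Ergodic T μ) (hfm : Measurable f)
    (hf : Integrable f μ) {c : ℝ} (hc : ∫ x, f x ∂μ < c) :
    ∀ᵐ x ∂μ, ∀ᶠ n in atTop, birkhoffAverage ℝ T f n x < c := by
  obtain ⟨c', hfc', hc'c⟩ := exists_between hc
  have hneg : ∫ x, (f - fun _ : X => c') x ∂μ < 0 := by
    rw [integral_sub' hf (integrable_const c'), integral_const]
    simp only [probReal_univ, smul_eq_mul, one_mul]
    linarith
  filter_upwards [hT.ae_bddAbove_birkhoffSum (hfm.sub measurable_const)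
    (hf.sub (integrable_const c')) hneg] with x ⟨M, hM⟩
  have hlim : Tendsto (fun n : ℕ => c' + M / n) atTop (𝓝 c') := by
    simpa using tendsto_const_nhds.add (tendsto_const_div_atTop_nhds_zero_nat M)
  filter_upwards [hlim.eventually_lt_const hc'c, eventually_gt_atTop 0] with n hn hn0
  have hSM : birkhoffSum T f n x - n * c' ≤ M := by
    have := hM (mem_range_self n)
    rwa [birkhoffSum_sub, birkhoffSum_of_comp_eq (φ := fun _ : X => c') rfl, Pi.smul_apply,
      nsmul_eq_mul] at this
  have hn0' : (0 : ℝ) < n := Nat.cast_pos.2 hn0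
  calc birkhoffAverage ℝ T f n x = birkhoffSum T f n x / n := by
        rw [birkhoffAverage, smul_eq_mul, inv_mul_eq_div]
    _ ≤ c' + M / n := by rw [div_le_iff₀ hn0', add_mul, div_mul_cancel₀ _ hn0'.ne']; linarith
    _ < c := hn

theorem Ergodic.ae_tendsto_birkhoffAverage_of_measurable (hT : Ergodic T μ)
    (hfm : Measurable f) (hf : Integrable f μ) :
    ∀ᵐ x ∂μ, Tendsto (birkhoffAverage ℝ T f · x) atTop (𝓝 (∫ x, f x ∂μ)) := by
  have hupper : ∀ g : X → ℝ, Measurable g → Integrable g μ →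
      ∀ᵐ x ∂μ, ∀ q : ℚ, ∫ x, g x ∂μ < q → ∀ᶠ n in atTop, birkhoffAverage ℝ T g n x < q :=
    fun g hgm hg => ae_all_iff.2 fun q => by
      by_cases hq : ∫ x, g x ∂μ < q
      · filter_upwards [hT.ae_eventually_birkhoffAverage_lt hgm hg hq] with x hx _ using hx
      · exact .of_forall fun x h => absurd h hq
  filter_upwards [hupper f hfm hf, hupper (-f) hfm.neg hf.neg] with x hf_lt hf_gt
  refine tendsto_order.2 ⟨fun a ha => ?_, fun b hb => ?_⟩
  · obtain ⟨q, haq, hq⟩ := exists_rat_btwn ha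
    filter_upwards [hf_gt (-q) (by simpa [integral_neg] using hq)] with n hn
    rw [birkhoffAverage_neg, Pi.neg_apply, Pi.neg_apply] at hn
    push_cast at hn
    linarith
  · obtain ⟨q, hq, hqb⟩ := exists_rat_btwn hb
    filter_upwards [hf_lt q hq] with n hn using hn.trans hqb

theorem Ergodic.ae_tendsto_birkhoffAverage (hT : Ergodic T μ) (hf : Integrable f μ) :
    ∀ᵐ x ∂μ, Tendsto (birkhoffAverage ℝ T f · x) atTop (𝓝 (∫ x, f x ∂μ)) := by
  have hmk : ∀ᵐ x ∂μ, ∀ k, f (T^[k] x) = hf.1.mk f (T^[k] x) := ae_all_iff.2 fun k =>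
    (hT.toMeasurePreserving.iterate k).quasiMeasurePreserving.ae hf.1.ae_eq_mk
  filter_upwards [hT.ae_tendsto_birkhoffAverage_of_measurable
    hf.1.stronglyMeasurable_mk.measurable (hf.congr hf.1.ae_eq_mk), hmk] with x hx hxk
  rw [integral_congr_ae hf.1.ae_eq_mk]
  convert hx using 2 with n
  simp only [birkhoffAverage, birkhoffSum, hxk]

theorem Ergodic.ae_tendsto_cesaro_iterate (hT : Ergodic T μ) (hf : Integrable f μ) :
    ∀ᵐ x ∂μ, Tendsto (fun N : ℕ => (N : ℝ)⁻¹ * ∑ n ∈ Finset.Icc 1 N, f (T^[n] x)) atTop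
      (𝓝 (∫ x, f x ∂μ)) := by
  filter_upwards [hT.quasiMeasurePreserving.ae (hT.ae_tendsto_birkhoffAverage hf)] with x hx
  simpa only [sum_Icc_iterate_eq_birkhoffSum, birkhoffAverage, smul_eq_mul] using hx

end PointwiseErgodic

section Cesaro

open Finset

theorem tendsto_inv_mul_sum_Icc_floor {v : ℕ → ℝ} {V c : ℝ} (hc : 0 ≤ c)
    (hv : Tendsto (fun N : ℕ => (N : ℝ)⁻¹ * ∑ n ∈ Icc 1 N, v n) atTop (𝓝 V)) :
    Tendsto (fun N : ℕ => (N : ℝ)⁻¹ * ∑ n ∈ Icc 1 ⌊c * N⌋₊, v n) atTop (𝓝 (c * V)) := by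
  rcases hc.eq_or_lt with rfl | hc
  · simp
  have hfloor : Tendsto (fun N : ℕ => ⌊c * N⌋₊) atTop atTop :=
    tendsto_nat_floor_atTop.comp (tendsto_natCast_atTop_atTop.const_mul_atTop hc)
  have hratio : Tendsto (fun N : ℕ => (⌊c * N⌋₊ : ℝ) / N) atTop (𝓝 c) :=
    (tendsto_nat_floor_mul_div_atTop hc.le).comp tendsto_natCast_atTop_atTop
  refine (hratio.mul (hv.comp hfloor)).congr' ?_
  filter_upwards [hfloor.eventually_ge_atTop 1] with N hN
  have : (⌊c * N⌋₊ : ℝ) ≠ 0 := Nat.cast_ne_zero.2 (by omega)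
  simp only [Function.comp_apply]
  field_simp

theorem abs_sum_Icc_le_of_le_on_head {d v w : ℕ → ℝ} {K N : ℕ} (hKN : K ≤ N)
    (hw : ∀ n, 0 ≤ w n) (hdw : ∀ n ∈ Icc 1 K, |d n| ≤ w n) (hdv : ∀ n, |d n| ≤ v n) :
    |∑ n ∈ Icc 1 N, d n| ≤ ∑ n ∈ Icc 1 N, w n + (∑ n ∈ Icc 1 N, v n - ∑ n ∈ Icc 1 K, v n) := by
  have hsub : Icc 1 K ⊆ Icc 1 N := Icc_subset_Icc_right hKN
  calc |∑ n ∈ Icc 1 N, d n| ≤ ∑ n ∈ Icc 1 N, |d n| := abs_sum_le_sum_abs _ _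
    _ = ∑ n ∈ Icc 1 N \ Icc 1 K, |d n| + ∑ n ∈ Icc 1 K, |d n| := (sum_sdiff hsub).symm
    _ ≤ ∑ n ∈ Icc 1 N \ Icc 1 K, v n + ∑ n ∈ Icc 1 N, w n :=
        add_le_add (sum_le_sum fun n _ => hdv n) ((sum_le_sum hdw).trans
          (sum_le_sum_of_subset_of_nonneg hsub fun n _ _ => hw n))
    _ = _ := by rw [← sum_sdiff hsub (f := v)]; ring

theorem tendsto_triangular_cesaro_zero {d : ℕ → ℕ → ℝ} {v : ℕ → ℝ} {V : ℝ}
    (hv : Tendsto (fun N : ℕ => (N : ℝ)⁻¹ * ∑ n ∈ Icc 1 N, v n) atTop (𝓝 V))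
    (hdv : ∀ N n, |d N n| ≤ v n)
    (hsmall : ∀ ε > 0, ∃ δ ∈ Set.Ioc (0 : ℝ) 1, ∃ w : ℕ → ℝ, ∃ W, (∀ n, 0 ≤ w n) ∧
      Tendsto (fun N : ℕ => (N : ℝ)⁻¹ * ∑ n ∈ Icc 1 N, w n) atTop (𝓝 W) ∧ W + δ * V < ε ∧
      ∀ᶠ N : ℕ in atTop, ∀ n : ℕ, 1 ≤ n → (n : ℝ) ≤ (1 - δ) * N → |d N n| ≤ w n) :
    Tendsto (fun N : ℕ => (N : ℝ)⁻¹ * ∑ n ∈ Icc 1 N, d N n) atTop (𝓝 0) := by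
  refine Metric.tendsto_nhds.2 fun ε hε => ?_
  obtain ⟨δ, ⟨hδ0, hδ1⟩, w, W, hw, hwW, hWε, hdw⟩ := hsmall ε hε
  have hbound := hwW.add (hv.sub (tendsto_inv_mul_sum_Icc_floor (sub_nonneg.2 hδ1) hv))
  filter_upwards [hbound.eventually_lt_const (by linarith : W + (V - (1 - δ) * V) < ε), hdw]
    with N hN hdwN
  have hKN : ⌊(1 - δ) * N⌋₊ ≤ N := Nat.floor_le_of_le (by nlinarith [N.cast_nonneg (α := ℝ)])
  have hsum := abs_sum_Icc_le_of_le_on_head hKN hw (fun n hn => hdwN n (mem_Icc.1 hn).1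
    ((Nat.cast_le.2 (mem_Icc.1 hn).2).trans (Nat.floor_le (by positivity)))) (hdv N)
  rw [Real.dist_eq, sub_zero, abs_mul, abs_inv, Nat.abs_cast]
  calc (N : ℝ)⁻¹ * |∑ n ∈ Icc 1 N, d N n|
      ≤ (N : ℝ)⁻¹ * (∑ n ∈ Icc 1 N, w n +
          (∑ n ∈ Icc 1 N, v n - ∑ n ∈ Icc 1 ⌊(1 - δ) * N⌋₊, v n)) :=
        mul_le_mul_of_nonneg_left hsum (by positivity)
    _ < ε := by rw [mul_add, mul_sub]; exact hN

end Cesaro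

section Maker

open Set

theorem nullMeasurable_iSup_of_measurable_uncurry {Y X : Type*} [TopologicalSpace Y]
    [PolishSpace Y] [MeasurableSpace Y] [BorelSpace Y] [MeasurableSpace X] {μ : Measure X}
    [IsFiniteMeasure μ] {F : Y → X → ℝ} (hF : Measurable (Function.uncurry F)) {s : Set Y}
    (hs : MeasurableSet s) [Nonempty s] (hbdd : ∀ x, BddAbove (range fun t : s => F t x)) :
    NullMeasurable (fun x => ⨆ t : s, F t x) μ := by
  refine measurable_of_Ioi fun c => ?_
  change NullMeasurableSet ((fun x => ⨆ t : s, F t x) ⁻¹' Ioi c) μ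
  have hlevel : (fun x => ⨆ t : s, F t x) ⁻¹' Ioi c =
      Prod.snd '' ({p | p.1 ∈ s} ∩ {p | c < Function.uncurry F p}) := by
    ext x
    simp [lt_ciSup_iff (hbdd x)]
  rw [hlevel]
  exact ((measurable_fst hs).inter
    (measurableSet_lt measurable_const hF)).nullMeasurableSet_image_snd

variable {X : Type*}

noncomputable def maxDeviation (G : ℝ → X → ℝ) (f : X → ℝ) (δ : ℝ) (y : X) : ℝ :=
  ⨆ t : {t : ℝ | |t| ≤ δ}, |G t y - f y|

variable {G : ℝ → X → ℝ} {f u : X → ℝ} {δ : ℝ}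

theorem nonempty_abs_le (hδ : 0 ≤ δ) : Nonempty {t : ℝ | |t| ≤ δ} :=
  ⟨⟨0, by rwa [mem_ofPred_eq, abs_zero]⟩⟩

theorem abs_sub_le_maxDeviation (hGu : ∀ t y, |G t y - f y| ≤ u y) {t : ℝ} (ht : |t| ≤ δ)
    (y : X) : |G t y - f y| ≤ maxDeviation G f δ y :=
  le_ciSup (f := fun t : {t : ℝ | |t| ≤ δ} => |G t y - f y|)
    ⟨u y, forall_mem_range.2 fun t => hGu t y⟩ ⟨t, ht⟩

theorem maxDeviation_nonneg (hGu : ∀ t y, |G t y - f y| ≤ u y) (hδ : 0 ≤ δ) (y : X) :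
    0 ≤ maxDeviation G f δ y :=
  (abs_nonneg _).trans (abs_sub_le_maxDeviation hGu (by rwa [abs_zero]) y)

theorem norm_maxDeviation_le (hGu : ∀ t y, |G t y - f y| ≤ u y) (hδ : 0 ≤ δ) (y : X) :
    ‖maxDeviation G f δ y‖ ≤ u y := by
  have := nonempty_abs_le hδ
  rw [Real.norm_eq_abs, abs_of_nonneg (maxDeviation_nonneg hGu hδ y)]
  exact ciSup_le fun t => hGu t y

theorem tendsto_maxDeviation_zero (hGu : ∀ t y, |G t y - f y| ≤ u y) {y : X}
    (hy : Tendsto (G · y) (𝓝 0) (𝓝 (f y))) :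
    Tendsto (fun k : ℕ => maxDeviation G f (k + 1)⁻¹ y) atTop (𝓝 0) := by
  refine Metric.tendsto_nhds.2 fun ε hε => ?_
  obtain ⟨r, hr, hGr⟩ :=
    Metric.eventually_nhds_iff.1 (Metric.tendsto_nhds.1 hy (ε / 2) (by positivity))
  have hk : Tendsto (fun k : ℕ => ((k : ℝ) + 1)⁻¹) atTop (𝓝 0) := by
    simpa using tendsto_one_div_add_atTop_nhds_zero_nat (𝕜 := ℝ)
  filter_upwards [hk.eventually_lt_const hr] with k hk
  have hδ : (0 : ℝ) ≤ ((k : ℝ) + 1)⁻¹ := by positivity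
  have := nonempty_abs_le hδ
  rw [Real.dist_eq, sub_zero, abs_of_nonneg (maxDeviation_nonneg hGu hδ y)]
  refine (ciSup_le fun t => ?_).trans_lt (half_lt_self hε)
  rw [← Real.dist_eq]
  exact (hGr (by rw [Real.dist_eq, sub_zero]; exact t.2.trans_lt hk)).le

variable [MeasurableSpace X] {μ : Measure X} [IsFiniteMeasure μ]

theorem integrable_maxDeviation
    (hG : Measurable (Function.uncurry G)) (hf : Measurable f) (hu : Integrable u μ)
    (hGu : ∀ t y, |G t y - f y| ≤ u y) (hδ : 0 ≤ δ) : Integrable (maxDeviation G f δ) μ := by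
  have := nonempty_abs_le hδ
  have hmeas : NullMeasurable (maxDeviation G f δ) μ :=
    nullMeasurable_iSup_of_measurable_uncurry (F := fun t y => |G t y - f y|)
      (hG.sub (hf.comp measurable_snd)).abs
      (measurableSet_le measurable_abs measurable_const)
      fun y => ⟨u y, forall_mem_range.2 fun t => hGu t y⟩
  exact hu.mono' hmeas.aemeasurable.aestronglyMeasurable
    (.of_forall (norm_maxDeviation_le hGu hδ))

theorem tendsto_integral_maxDeviation (hG : Measurable (Function.uncurry G)) (hf : Measurable f)
    (hu : Integrable u μ) (hGu : ∀ t y, |G t y - f y| ≤ u y)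
    (hconv : ∀ᵐ y ∂μ, Tendsto (G · y) (𝓝 0) (𝓝 (f y))) :
    Tendsto (fun k : ℕ => ∫ y, maxDeviation G f (k + 1)⁻¹ y ∂μ) atTop (𝓝 0) := by
  have hδ : ∀ k : ℕ, (0 : ℝ) ≤ ((k : ℝ) + 1)⁻¹ := fun k => by positivity
  simpa using tendsto_integral_of_dominated_convergence u
    (fun k => (integrable_maxDeviation hG hf hu hGu (hδ k)).aestronglyMeasurable) hu
    (fun k => .of_forall (norm_maxDeviation_le hGu (hδ k)))
    (hconv.mono fun y hy => tendsto_maxDeviation_zero hGu hy)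

theorem Ergodic.ae_tendsto_cesaro_sub_of_tendsto [IsProbabilityMeasure μ] {T : X → X}
    (hT : Ergodic T μ) (hG : Measurable (Function.uncurry G)) (hf : Measurable f)
    (hu : Integrable u μ) (hGu : ∀ t y, |G t y - f y| ≤ u y)
    (hconv : ∀ᵐ y ∂μ, Tendsto (G · y) (𝓝 0) (𝓝 (f y))) {tN : ℕ → ℕ → X → ℝ}
    (htN : ∀ᵐ x ∂μ, ∀ ε > (0 : ℝ), ∀ᶠ N : ℕ in atTop,
      ∀ n : ℕ, 1 ≤ n → (n : ℝ) ≤ (1 - ε) * N → |tN N n x| < ε) :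
    ∀ᵐ x ∂μ, Tendsto (fun N : ℕ => (N : ℝ)⁻¹ *
      ∑ n ∈ Finset.Icc 1 N, (G (tN N n x) (T^[n] x) - f (T^[n] x))) atTop (𝓝 0) := by
  have hδ : ∀ k : ℕ, (0 : ℝ) < ((k : ℝ) + 1)⁻¹ := fun k => by positivity
  have hsmall : Tendsto (fun k : ℕ => ∫ y, maxDeviation G f (k + 1)⁻¹ y ∂μ +
      ((k : ℝ) + 1)⁻¹ * ∫ y, u y ∂μ) atTop (𝓝 0) := by
    simpa using (tendsto_integral_maxDeviation hG hf hu hGu hconv).add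
      ((tendsto_one_div_add_atTop_nhds_zero_nat (𝕜 := ℝ)).mul_const _)
  filter_upwards [hT.ae_tendsto_cesaro_iterate hu, ae_all_iff.2 fun k : ℕ =>
    hT.ae_tendsto_cesaro_iterate (integrable_maxDeviation hG hf hu hGu (hδ k).le), htN]
    with x hux hdevx htNx
  refine tendsto_triangular_cesaro_zero hux (fun N n => hGu _ _) fun ε hε => ?_
  obtain ⟨k, hk⟩ := (hsmall.eventually_lt_const hε).exists
  refine ⟨_, ⟨hδ k, inv_le_one_of_one_le₀ (by simp)⟩, _, _,
    fun n => maxDeviation_nonneg hGu (hδ k).le _, hdevx k, hk, ?_⟩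
  filter_upwards [htNx _ (hδ k)] with N hN n hn hnN
  exact abs_sub_le_maxDeviation hGu (hN n hn hnN).le _

end Maker

theorem maker_ergodic_theorem_variant
    {X : Type*} [MeasurableSpace X] (θ : Measure X) [IsProbabilityMeasure θ]
    (T : X → X) (hT : Ergodic T θ)
    (G : ℝ → X → ℝ) (Glim : X → ℝ)
    (hmeas : Measurable (Function.uncurry G))
    (bound : X → ℝ) (hbound : Integrable bound θ)
    (hdom : ∀ t x, |G t x| ≤ bound x)
    (hGlim : ∀ᵐ x ∂θ, Tendsto (fun t => G t x) (nhds 0) (nhds (Glim x)))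
    (tN : ℕ → ℕ → X → ℝ)
    (htN : ∀ᵐ x ∂θ, ∀ ε > (0 : ℝ), ∀ᶠ N : ℕ in atTop,
      ∀ n : ℕ, 1 ≤ n → (n : ℝ) ≤ (1 - ε) * N → |tN N n x| < ε) :
    ∀ᵐ x ∂θ, Tendsto
      (fun N : ℕ => (1 / N : ℝ) * ∑ n ∈ Finset.Icc 1 N, G (tN N n x) (T^[n] x))
      atTop (nhds (∫ y, Glim y ∂θ)) := by
  have hGlim_meas : AEMeasurable Glim θ :=
    aemeasurable_of_tendsto_metrizable_ae' (fun k : ℕ => (hmeas.comp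
      (measurable_const.prodMk measurable_id)).aemeasurable (μ := θ))
      (hGlim.mono fun x hx => hx.comp (tendsto_one_div_add_atTop_nhds_zero_nat (𝕜 := ℝ)))
  obtain ⟨f, hfm, hGlim_f⟩ : ∃ f, Measurable f ∧ Glim =ᵐ[θ] f :=
    ⟨_, hGlim_meas.measurable_mk, hGlim_meas.ae_eq_mk⟩
  have hconv : ∀ᵐ y ∂θ, Tendsto (G · y) (𝓝 0) (𝓝 (f y)) := by
    filter_upwards [hGlim, hGlim_f] with y hy hfy
    rwa [← hfy]
  have hf : Integrable f θ := hbound.mono' hfm.aestronglyMeasurable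
    (hconv.mono fun y hy => le_of_tendsto hy.norm (.of_forall fun t => hdom t y))
  have hGu : ∀ t y, |G t y - f y| ≤ bound y + |f y| := fun t y =>
    (abs_sub _ _).trans (add_le_add (hdom t y) le_rfl)
  rw [integral_congr_ae hGlim_f]
  filter_upwards [hT.ae_tendsto_cesaro_iterate hf, hT.ae_tendsto_cesaro_sub_of_tendsto hmeas
    hfm (hbound.add hf.abs) hGu hconv htN] with x hfx hdx
  convert hfx.add hdx using 2 with N
  · rw [one_div, ← mul_add, ← Finset.sum_add_distrib]
    simp
  · simp
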